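/- Let F be a number field or a global function field, X = Spec(O_F), and for each nonempty open subscheme U ⊆ X define the relative idele group I(U⊂X) = ⊕_{x∈|U|} ℤ ⊕ ⊕_{v∈X∖U} F_v^× (with F_v the henselization of F at v, direct sum topology). Then the natural map from the classical restricted-product idele group I_c(F) = colim_S (∏_{v∈S} F_v^× × ∏_{v∉S} O_{F_v}^×) to the inverse limit I(F) = lim_U I(U⊂X) is an isomorphism of topological groups. -/

import Mathlib

open IsDedekindDomain Multiplicative WithZero
open scoped Classical

noncomputable section

variable {A : Type*} [CommRing A] [IsDedekindDomain A]
variable {F : Type*} [Field F] [Algebra A F] [IsFractionRing A F]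
variable (Fv : HeightOneSpectrum A → Type*) [∀ v, Field (Fv v)] [∀ v, Algebra F (Fv v)]
variable [∀ v, Valued (Fv v) (WithZero (Multiplicative ℤ))]

/-- The normalized `ℤ`-valued valuation of a unit of the discretely valued field `Fv v`. -/
def valUnit (v : HeightOneSpectrum A) (x : (Fv v)ˣ) : ℤ :=
  - Multiplicative.toAdd (WithZero.unzero
    ((Valuation.ne_zero_iff (Valued.v : Valuation (Fv v) (WithZero (Multiplicative ℤ)))).2
      x.ne_zero))

/-- The classical (henselian, finite) idele group as a subgroup of `Π_v F_v^×`: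
families of units which lie in `O_{F_v}^×` (valuation `1`) for all but finitely many `v`.
This is `I_c(F) = colim_S ∏_{v∈S} F_v^× × ∏_{v∉S} O_{F_v}^×` as a group. -/
def IcSub : Subgroup (Π v, (Fv v)ˣ) where
  carrier := {x | {v | (Valued.v ((x v : Fv v)) : WithZero (Multiplicative ℤ)) ≠ 1}.Finite}
  mul_mem' := by
    intro x y hx hy
    refine Set.Finite.subset (hx.union hy) fun v hv => ?_
    by_contra h
    simp only [Set.mem_union, Set.mem_setOf_eq, not_or, not_not] at h
    exact hv (by simp [Units.val_mul, map_mul, h.1, h.2])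
  one_mem' := by
    refine Set.Finite.subset (Set.finite_empty) fun v hv => ?_
    exact hv (by simp)
  inv_mem' := by
    intro x hx
    refine Set.Finite.subset hx fun v hv => ?_
    simp only [Set.mem_setOf_eq] at hv ⊢
    intro h
    apply hv
    rw [Pi.inv_apply, Units.val_inv_eq_inv_val, map_inv₀, h, inv_one]

/-- The classical idele group `I_c(F)`. -/
def Ic : Type _ := ↥(IcSub Fv)

instance : CommGroup (Ic Fv) := inferInstanceAs (CommGroup ↥(IcSub Fv))

/-- The underlying family of units of a classical idele. -/
def Ic.comp (x : Ic Fv) : Π v, (Fv v)ˣ := (show ↥(IcSub Fv) from x).1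

/-- The restricted product topology on `I_c(F)`: basic open sets are given by a finite
set `S` of places, arbitrary open conditions at `v ∈ S`, and the integral-unit condition
at `v ∉ S`.  (This is the direct limit topology of `(\ref{clidele})`.) -/
instance : TopologicalSpace (Ic Fv) :=
  TopologicalSpace.generateFrom
    {s | ∃ (S : Finset (HeightOneSpectrum A)) (W : ∀ v, Set ((Fv v)ˣ)),
      (∀ v, IsOpen (W v)) ∧
      s = {x : Ic Fv | (∀ v ∈ S, Ic.comp Fv x v ∈ W v) ∧
        ∀ v ∉ S, (Valued.v ((Ic.comp Fv x v : Fv v)) : WithZero (Multiplicative ℤ)) = 1}}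

/-- The `⊕_{x ∈ |U|} ℤ` part of the relative idele group `I(U ⊂ X)`, for `U` the
complement of the finite set `D` of places: finitely supported `ℤ`-valued functions on
the places, supported away from `D`. -/
def ZSgrp (D : Finset (HeightOneSpectrum A)) : AddSubgroup (HeightOneSpectrum A → ℤ) where
  carrier := {f | (Function.support f).Finite ∧ ∀ v ∈ D, f v = 0}
  add_mem' := by
    intro f g hf hg
    exact ⟨Set.Finite.subset (hf.1.union hg.1) (Function.support_add f g),
      fun v hv => by simp [hf.2 v hv, hg.2 v hv]⟩
  zero_mem' := by constructor <;> simp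
  neg_mem' := by
    intro f hf
    exact ⟨Set.Finite.subset hf.1 (by simp [Function.support_neg]),
      fun v hv => by simp [hf.2 v hv]⟩

/-- The `⊕ℤ` part as a type; it carries the direct sum topology, which is discrete. -/
def ZSpart (D : Finset (HeightOneSpectrum A)) : Type _ := ↥(ZSgrp (A := A) D)

instance (D : Finset (HeightOneSpectrum A)) : AddCommGroup (ZSpart (A := A) D) :=
  inferInstanceAs (AddCommGroup ↥(ZSgrp (A := A) D))

instance (D : Finset (HeightOneSpectrum A)) : TopologicalSpace (ZSpart (A := A) D) := ⊥

/-- The underlying function of an element of the `⊕ℤ` part. -/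
def ZSpart.f {D : Finset (HeightOneSpectrum A)} (g : ZSpart (A := A) D) :
    HeightOneSpectrum A → ℤ := (show ↥(ZSgrp (A := A) D) from g).1

lemma ZSpart.finite {D : Finset (HeightOneSpectrum A)} (g : ZSpart (A := A) D) :
    (Function.support (ZSpart.f g)).Finite :=
  (show (Function.support (ZSpart.f g)).Finite ∧ ∀ v ∈ D, ZSpart.f g v = 0 from
    (show ↥(ZSgrp (A := A) D) from g).2).1

lemma ZSpart.vanish {D : Finset (HeightOneSpectrum A)} (g : ZSpart (A := A) D) :
    ∀ v ∈ D, ZSpart.f g v = 0 :=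
  (show (Function.support (ZSpart.f g)).Finite ∧ ∀ v ∈ D, ZSpart.f g v = 0 from
    (show ↥(ZSgrp (A := A) D) from g).2).2

/-- The `⊕_{v ∈ D} F_v^×` part of the relative idele group `I(U ⊂ X)`: families of units
which are trivial away from the finite set `D`; as `D` is finite the direct sum topology
is the product topology. -/
def GDgrp (D : Finset (HeightOneSpectrum A)) : Subgroup (Π v, (Fv v)ˣ) where
  carrier := {x | ∀ v ∉ D, x v = 1}
  mul_mem' := by intro x y hx hy v hv; simp [hx v hv, hy v hv]
  one_mem' := by intro v hv; rfl
  inv_mem' := by intro x hx v hv; simp [hx v hv]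

/-- The relative idele group `I(U ⊂ X) = ⊕_{x∈|U|} ℤ ⊕ ⊕_{v∈D} F_v^×` (written
additively), `U = X ∖ D`, with the direct sum topology. -/
def IDgrp (D : Finset (HeightOneSpectrum A)) : Type _ :=
  Additive ↥(GDgrp Fv D) × ZSpart (A := A) D

instance (D : Finset (HeightOneSpectrum A)) : AddCommGroup (IDgrp Fv D) :=
  inferInstanceAs (AddCommGroup (Additive ↥(GDgrp Fv D) × ZSpart (A := A) D))

instance (D : Finset (HeightOneSpectrum A)) : TopologicalSpace (IDgrp Fv D) :=
  inferInstanceAs (TopologicalSpace (Additive ↥(GDgrp Fv D) × ZSpart (A := A) D))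

/-- Constructor for elements of `I(U ⊂ X)`. -/
def IDgrp.mk {D : Finset (HeightOneSpectrum A)} (g : ↥(GDgrp Fv D))
    (z : ZSpart (A := A) D) : IDgrp Fv D := (Additive.ofMul g, z)

/-- The units component of an element of `I(U ⊂ X)`. -/
def IDgrp.g {D : Finset (HeightOneSpectrum A)} (x : IDgrp Fv D) : Π v, (Fv v)ˣ :=
  ((Additive.toMul (show Additive ↥(GDgrp Fv D) × ZSpart (A := A) D from x).1 :
    ↥(GDgrp Fv D)) : Π v, (Fv v)ˣ)

/-- The `⊕ℤ` component of an element of `I(U ⊂ X)`. -/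
def IDgrp.z {D : Finset (HeightOneSpectrum A)} (x : IDgrp Fv D) :
    HeightOneSpectrum A → ℤ :=
  ZSpart.f (show Additive ↥(GDgrp Fv D) × ZSpart (A := A) D from x).2

lemma IDgrp.g_one {D : Finset (HeightOneSpectrum A)} (x : IDgrp Fv D) :
    ∀ v ∉ D, IDgrp.g Fv x v = 1 :=
  (show Additive ↥(GDgrp Fv D) × ZSpart (A := A) D from x).1.2

lemma IDgrp.z_finite {D : Finset (HeightOneSpectrum A)} (x : IDgrp Fv D) :
    (Function.support (IDgrp.z Fv x)).Finite :=
  ZSpart.finite _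

/-- The transition map `I(U' ⊂ X) → I(U ⊂ X)` for `U' ⊆ U`, i.e. `D ⊆ D'`: units at the
places of `D' ∖ D` are sent to their valuations in `ℤ`. -/
def idTrans {D D' : Finset (HeightOneSpectrum A)} (_ : D ⊆ D') (x : IDgrp Fv D') :
    IDgrp Fv D :=
  IDgrp.mk Fv
    (⟨fun v => if v ∈ D then IDgrp.g Fv x v else 1, fun v hv => by simp [hv]⟩)
    (⟨fun v => if v ∈ D then 0
        else if v ∈ D' then valUnit Fv v (IDgrp.g Fv x v)
        else IDgrp.z Fv x v, by
      constructor
      · refine Set.Finite.subset (D'.finite_toSet.union (IDgrp.z_finite Fv x)) fun v hv => ?_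
        simp only [Function.mem_support] at hv
        by_cases h1 : v ∈ D
        · simp [h1] at hv
        · by_cases h2 : v ∈ D'
          · exact Or.inl h2
          · right
            simp only [h1, h2, if_false] at hv
            exact hv
      · intro v hv
        simp [hv]⟩)

/-- The idele group `I(F) = lim_U I(U ⊂ X)`, inverse limit over all nonempty open
subschemes `U = X ∖ D`, with the inverse limit topology. -/
def Ilim : Type _ :=
  {φ : Π D : Finset (HeightOneSpectrum A), IDgrp Fv D //
    ∀ (D D' : Finset (HeightOneSpectrum A)) (h : D ⊆ D'), idTrans Fv h (φ D') = φ D}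

instance : TopologicalSpace (Ilim Fv) :=
  inferInstanceAs (TopologicalSpace
    {φ : Π D : Finset (HeightOneSpectrum A), IDgrp Fv D //
      ∀ (D D' : Finset (HeightOneSpectrum A)) (h : D ⊆ D'), idTrans Fv h (φ D') = φ D})

/-- Evaluation of an element of the inverse limit `I(F)` at the level `U = X ∖ D`. -/
def Ilim.at (φ : Ilim Fv) (D : Finset (HeightOneSpectrum A)) : IDgrp Fv D :=
  (show {φ : Π D : Finset (HeightOneSpectrum A), IDgrp Fv D //
    ∀ (D D' : Finset (HeightOneSpectrum A)) (h : D ⊆ D'), idTrans Fv h (φ D') = φ D}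
    from φ).1 D

/-!
An element `φ` of the limit is determined by its `F_v^×`-components at the singleton levels
`{v}`: compatibility forces the component of `φ` at any level `D ∋ v` to be that unit, and its
`ℤ`-component at `v ∉ D` to be its valuation. The finiteness of the `ℤ`-part of `φ` at the
level `∅` is then exactly the restricted-product condition. Topologically, the basic open set
of `I_c(F)` attached to `S` is the preimage of the open set of `I(X ∖ S ⊂ X)` cut out by open
conditions at `v ∈ S` and a vanishing `ℤ`-part; conversely, the `ℤ`-part of an idele at any
level is locally constant, since valuations are locally constant and almost all components are
units.
-/

theorem Valued.isOpen_setOf_v_eq {R Γ₀ : Type*} [Ring R] [LinearOrderedCommGroupWithZero Γ₀]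
    [Valued R Γ₀] {γ : Γ₀} (hγ : γ ≠ 0) : IsOpen {x : R | Valued.v x = γ} := by
  refine isOpen_iff_mem_nhds.2 fun x (hx : Valued.v x = γ) => ?_
  have := Valued.locally_const (x := x) (by rwa [hx])
  rwa [hx] at this

section

omit [IsDedekindDomain A]

section valUnit

variable {Fv} (v : HeightOneSpectrum A)

lemma valued_v_eq_ofAdd_neg_valUnit (u : (Fv v)ˣ) :
    Valued.v (u : Fv v) = ((ofAdd (-valUnit Fv v u) : Multiplicative ℤ) : WithZero _) := by
  rw [valUnit, neg_neg, ofAdd_toAdd, WithZero.coe_unzero]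

lemma valUnit_eq_iff (u w : (Fv v)ˣ) :
    valUnit Fv v u = valUnit Fv v w ↔ Valued.v (u : Fv v) = Valued.v (w : Fv v) := by
  simp [valued_v_eq_ofAdd_neg_valUnit]

lemma valUnit_eq_zero_iff (u : (Fv v)ˣ) :
    valUnit Fv v u = 0 ↔ Valued.v (u : Fv v) = 1 := by
  rw [valued_v_eq_ofAdd_neg_valUnit, ← WithZero.coe_one, WithZero.coe_inj, ← ofAdd_zero,
    ofAdd.injective.eq_iff, neg_eq_zero]

lemma valUnit_mul (a b : (Fv v)ˣ) :
    valUnit Fv v (a * b) = valUnit Fv v a + valUnit Fv v b := by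
  have h := valued_v_eq_ofAdd_neg_valUnit v (a * b)
  rw [Units.val_mul, map_mul, valued_v_eq_ofAdd_neg_valUnit, valued_v_eq_ofAdd_neg_valUnit,
    ← WithZero.coe_mul, WithZero.coe_inj, ← ofAdd_add, ofAdd.injective.eq_iff] at h
  linarith

lemma isOpen_setOf_valued_v_units_eq (b : (Fv v)ˣ) :
    IsOpen {u : (Fv v)ˣ | Valued.v (u : Fv v) = Valued.v (b : Fv v)} :=
  (Valued.isOpen_setOf_v_eq ((Valuation.ne_zero_iff _).2 b.ne_zero)).preimage
    Units.continuous_val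

end valUnit

namespace Ic

lemma finite_setOf_valued_v_ne_one (x : Ic Fv) :
    {v | (Valued.v (Ic.comp Fv x v : Fv v) : WithZero (Multiplicative ℤ)) ≠ 1}.Finite :=
  (show ↥(IcSub Fv) from x).2

lemma comp_mul (x y : Ic Fv) (v : HeightOneSpectrum A) :
    Ic.comp Fv (x * y) v = Ic.comp Fv x v * Ic.comp Fv y v := rfl

def nonUnitSupport (x : Ic Fv) : Finset (HeightOneSpectrum A) :=
  (finite_setOf_valued_v_ne_one Fv x).toFinset

lemma valued_v_eq_one_of_notMem_nonUnitSupport (x : Ic Fv) {v : HeightOneSpectrum A}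
    (hv : v ∉ nonUnitSupport Fv x) : Valued.v (Ic.comp Fv x v : Fv v) = 1 := by
  simpa [nonUnitSupport] using hv

lemma isOpen_basic (S : Finset (HeightOneSpectrum A)) (W : ∀ v, Set ((Fv v)ˣ))
    (hW : ∀ v, IsOpen (W v)) :
    IsOpen {x : Ic Fv | (∀ v ∈ S, Ic.comp Fv x v ∈ W v) ∧
      ∀ v ∉ S, (Valued.v ((Ic.comp Fv x v : Fv v)) : WithZero (Multiplicative ℤ)) = 1} :=
  TopologicalSpace.isOpen_generateFrom_of_mem ⟨S, W, hW, rfl⟩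

lemma exists_isOpen_valued_v_eq (x : Ic Fv) (S : Finset (HeightOneSpectrum A))
    (W : ∀ v, Set ((Fv v)ˣ)) (hW : ∀ v, IsOpen (W v)) (hx : ∀ v ∈ S, Ic.comp Fv x v ∈ W v) :
    ∃ U : Set (Ic Fv), IsOpen U ∧ x ∈ U ∧ ∀ y ∈ U, ∀ v, (v ∈ S → Ic.comp Fv y v ∈ W v) ∧
      Valued.v (Ic.comp Fv y v : Fv v) = Valued.v (Ic.comp Fv x v : Fv v) := by
  set T := S ∪ nonUnitSupport Fv x
  set V : ∀ v, Set ((Fv v)ˣ) := fun v =>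
    {u | (v ∈ S → u ∈ W v) ∧ Valued.v (u : Fv v) = Valued.v (Ic.comp Fv x v : Fv v)}
  have hV : ∀ v, IsOpen (V v) := fun v => by
    by_cases hv : v ∈ S
    · simp only [V, hv, true_implies]
      exact (hW v).inter (isOpen_setOf_valued_v_units_eq v _)
    · simpa only [V, hv, false_implies, true_and] using isOpen_setOf_valued_v_units_eq v _
  have hT : ∀ v ∉ T, Valued.v (Ic.comp Fv x v : Fv v) = 1 := fun v hv =>
    valued_v_eq_one_of_notMem_nonUnitSupport Fv x fun h => hv (Finset.mem_union_right _ h)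
  refine ⟨_, isOpen_basic Fv T V hV, ⟨fun v _ => ⟨hx v, rfl⟩, hT⟩, fun y hy v => ?_⟩
  by_cases hv : v ∈ T
  · exact hy.1 v hv
  · exact ⟨fun hS => absurd (Finset.mem_union_left _ hS) hv, (hy.2 v hv).trans (hT v hv).symm⟩

lemma continuous_comp (v : HeightOneSpectrum A) :
    Continuous fun x : Ic Fv => Ic.comp Fv x v := by
  refine continuous_def.2 fun W hW => isOpen_iff_forall_mem_open.2 fun x hx => ?_
  have hW' : ∀ w, IsOpen (Function.update (fun w => (Set.univ : Set (Fv w)ˣ)) v W w) := by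
    intro w
    by_cases hw : w = v
    · subst hw; simpa using hW
    · simp [hw]
  obtain ⟨U, hU, hxU, hUW⟩ := exists_isOpen_valued_v_eq Fv x {v} _ hW' (by simpa using hx)
  exact ⟨U, fun y hy => by simpa using (hUW y hy v).1 (Finset.mem_singleton_self v), hU, hxU⟩

end Ic

namespace IDgrp

variable {Fv} {D : Finset (HeightOneSpectrum A)}

section

omit [∀ v, Valued (Fv v) (WithZero (Multiplicative ℤ))]

lemma ext {p q : IDgrp Fv D} (hg : ∀ v, IDgrp.g Fv p v = IDgrp.g Fv q v)
    (hz : ∀ v, IDgrp.z Fv p v = IDgrp.z Fv q v) : p = q :=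
  Prod.ext (congrArg Additive.ofMul (Subtype.ext (funext hg))) (Subtype.ext (funext hz))

lemma g_add (p q : IDgrp Fv D) (v : HeightOneSpectrum A) :
    IDgrp.g Fv (p + q) v = IDgrp.g Fv p v * IDgrp.g Fv q v := rfl

lemma z_add (p q : IDgrp Fv D) (v : HeightOneSpectrum A) :
    IDgrp.z Fv (p + q) v = IDgrp.z Fv p v + IDgrp.z Fv q v := rfl

lemma z_eq_zero_of_mem (p : IDgrp Fv D) {v : HeightOneSpectrum A} (hv : v ∈ D) :
    IDgrp.z Fv p v = 0 :=
  (show ↥(ZSgrp (A := A) D) from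
    (show Additive ↥(GDgrp Fv D) × ZSpart (A := A) D from p).2).2.2 v hv

end

instance : DiscreteTopology (ZSpart (A := A) D) := ⟨rfl⟩

lemma continuous_g (v : HeightOneSpectrum A) :
    Continuous fun p : IDgrp Fv D => IDgrp.g Fv p v :=
  (continuous_apply v).comp (continuous_subtype_val.comp (continuous_toMul.comp continuous_fst))

lemma isOpen_setOf_z (P : (HeightOneSpectrum A → ℤ) → Prop) :
    IsOpen {p : IDgrp Fv D | P (IDgrp.z Fv p)} :=
  (isOpen_discrete {z : ZSpart (A := A) D | P (ZSpart.f z)}).preimage continuous_snd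

end IDgrp

namespace Ic

def unitsPart (x : Ic Fv) (D : Finset (HeightOneSpectrum A)) : ↥(GDgrp Fv D) :=
  ⟨fun v => if v ∈ D then Ic.comp Fv x v else 1, fun _ hv => if_neg hv⟩

def valuationPart (x : Ic Fv) (D : Finset (HeightOneSpectrum A)) : ZSpart (A := A) D :=
  ⟨fun v => if v ∈ D then 0 else valUnit Fv v (Ic.comp Fv x v), by
    refine ⟨(finite_setOf_valued_v_ne_one Fv x).subset fun v hv => ?_, fun _ hv => if_pos hv⟩
    rw [Function.mem_support] at hv
    by_cases hD : v ∈ D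
    · exact absurd (if_pos hD) hv
    · exact mt (valUnit_eq_zero_iff v _).2 (by simpa only [hD, if_false] using hv)⟩

def toRelative (x : Ic Fv) (D : Finset (HeightOneSpectrum A)) : IDgrp Fv D :=
  IDgrp.mk Fv (unitsPart Fv x D) (valuationPart Fv x D)

lemma g_toRelative (x : Ic Fv) (D : Finset (HeightOneSpectrum A)) (v : HeightOneSpectrum A) :
    IDgrp.g Fv (toRelative Fv x D) v = if v ∈ D then Ic.comp Fv x v else 1 := rfl

lemma z_toRelative (x : Ic Fv) (D : Finset (HeightOneSpectrum A)) (v : HeightOneSpectrum A) :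
    IDgrp.z Fv (toRelative Fv x D) v = if v ∈ D then 0 else valUnit Fv v (Ic.comp Fv x v) :=
  rfl

lemma toRelative_mul (x y : Ic Fv) (D : Finset (HeightOneSpectrum A)) :
    toRelative Fv (x * y) D = toRelative Fv x D + toRelative Fv y D := by
  refine IDgrp.ext (fun v => ?_) (fun v => ?_)
  · by_cases hv : v ∈ D <;> simp [IDgrp.g_add, g_toRelative, comp_mul, hv]
  · by_cases hv : v ∈ D <;> simp [IDgrp.z_add, z_toRelative, comp_mul, valUnit_mul, hv]

lemma continuous_unitsPart (D : Finset (HeightOneSpectrum A)) :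
    Continuous fun x : Ic Fv => unitsPart Fv x D := by
  refine Continuous.subtype_mk (continuous_pi fun v => ?_) _
  by_cases hv : v ∈ D
  · simpa only [hv, if_true] using continuous_comp Fv v
  · simpa only [hv, if_false] using continuous_const

lemma isLocallyConstant_valuationPart (D : Finset (HeightOneSpectrum A)) :
    IsLocallyConstant fun x : Ic Fv => valuationPart Fv x D := by
  refine (IsLocallyConstant.iff_exists_open _).2 fun x => ?_
  obtain ⟨U, hU, hxU, hUx⟩ :=
    exists_isOpen_valued_v_eq Fv x ∅ (fun _ => Set.univ) (fun _ => isOpen_univ) (by simp)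
  refine ⟨U, hU, hxU, fun y hy => Subtype.ext (funext fun v => ?_)⟩
  show (if v ∈ D then 0 else valUnit Fv v _) = if v ∈ D then 0 else valUnit Fv v _
  rw [(valUnit_eq_iff v _ _).2 (hUx y hy v).2]

lemma continuous_toRelative (D : Finset (HeightOneSpectrum A)) :
    Continuous fun x : Ic Fv => toRelative Fv x D :=
  (continuous_ofMul.comp (continuous_unitsPart Fv D)).prodMk
    (isLocallyConstant_valuationPart Fv D).continuous

end Ic

end

namespace IDgrp

variable {Fv} {D : Finset (HeightOneSpectrum A)}

lemma g_idTrans {D' : Finset (HeightOneSpectrum A)} (h : D ⊆ D') (p : IDgrp Fv D')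
    (v : HeightOneSpectrum A) :
    IDgrp.g Fv (idTrans Fv h p) v = if v ∈ D then IDgrp.g Fv p v else 1 := rfl

lemma z_idTrans {D' : Finset (HeightOneSpectrum A)} (h : D ⊆ D') (p : IDgrp Fv D')
    (v : HeightOneSpectrum A) :
    IDgrp.z Fv (idTrans Fv h p) v = if v ∈ D then 0
      else if v ∈ D' then valUnit Fv v (IDgrp.g Fv p v) else IDgrp.z Fv p v := rfl

end IDgrp

namespace Ilim

variable {Fv}

lemma idTrans_at (φ : Ilim Fv) {D D' : Finset (HeightOneSpectrum A)} (h : D ⊆ D') :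
    idTrans Fv h (Ilim.at Fv φ D') = Ilim.at Fv φ D :=
  (show {φ : Π D : Finset (HeightOneSpectrum A), IDgrp Fv D //
    ∀ (D D' : Finset (HeightOneSpectrum A)) (h : D ⊆ D'), idTrans Fv h (φ D') = φ D}
    from φ).2 D D' h

lemma g_at_of_mem (φ : Ilim Fv) {D : Finset (HeightOneSpectrum A)} {v : HeightOneSpectrum A}
    (hv : v ∈ D) : IDgrp.g Fv (Ilim.at Fv φ D) v = IDgrp.g Fv (Ilim.at Fv φ {v}) v := by
  rw [← idTrans_at φ (Finset.singleton_subset_iff.2 hv), IDgrp.g_idTrans,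
    if_pos (Finset.mem_singleton_self v)]

lemma z_at_of_notMem (φ : Ilim Fv) {D : Finset (HeightOneSpectrum A)}
    {v : HeightOneSpectrum A} (hv : v ∉ D) :
    IDgrp.z Fv (Ilim.at Fv φ D) v = valUnit Fv v (IDgrp.g Fv (Ilim.at Fv φ {v}) v) := by
  have hsub : D ⊆ insert v D := Finset.subset_insert v D
  rw [← idTrans_at φ hsub, IDgrp.z_idTrans, if_neg hv, if_pos (Finset.mem_insert_self v D),
    g_at_of_mem φ (Finset.mem_insert_self v D)]

lemma continuous_eval (D : Finset (HeightOneSpectrum A)) :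
    Continuous fun φ : Ilim Fv => Ilim.at Fv φ D :=
  (continuous_apply D).comp continuous_subtype_val

end Ilim

def Ic.toIlim (x : Ic Fv) : Ilim Fv :=
  ⟨fun D => Ic.toRelative Fv x D, fun D D' h => by
    refine IDgrp.ext (fun v => ?_) (fun v => ?_)
    · by_cases hv : v ∈ D
      · simp [IDgrp.g_idTrans, Ic.g_toRelative, hv, h hv]
      · simp [IDgrp.g_idTrans, Ic.g_toRelative, hv]
    · by_cases hv : v ∈ D
      · simp [IDgrp.z_idTrans, Ic.z_toRelative, hv]
      · by_cases hv' : v ∈ D' <;>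
          simp [IDgrp.z_idTrans, Ic.z_toRelative, Ic.g_toRelative, hv, hv']⟩

def Ilim.toIc (φ : Ilim Fv) : Ic Fv :=
  ⟨fun v => IDgrp.g Fv (Ilim.at Fv φ {v}) v,
    (IDgrp.z_finite Fv (Ilim.at Fv φ ∅)).subset fun v hv => by
      rw [Function.mem_support, Ilim.z_at_of_notMem φ (Finset.notMem_empty v)]
      exact mt (valUnit_eq_zero_iff v _).1 hv⟩

lemma Ilim.comp_toIc (φ : Ilim Fv) (v : HeightOneSpectrum A) :
    Ic.comp Fv (Ilim.toIc Fv φ) v = IDgrp.g Fv (Ilim.at Fv φ {v}) v := rfl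

def icEquivIlim : Ic Fv ≃ Ilim Fv where
  toFun := Ic.toIlim Fv
  invFun := Ilim.toIc Fv
  left_inv x := Subtype.ext (funext fun v => by
    show IDgrp.g Fv (Ic.toRelative Fv x {v}) v = Ic.comp Fv x v
    simp [Ic.g_toRelative])
  right_inv φ := Subtype.ext (funext fun D => by
    show Ic.toRelative Fv (Ilim.toIc Fv φ) D = Ilim.at Fv φ D
    refine IDgrp.ext (fun v => ?_) (fun v => ?_)
    · by_cases hv : v ∈ D
      · rw [Ic.g_toRelative, if_pos hv, Ilim.comp_toIc, Ilim.g_at_of_mem φ hv]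
      · rw [Ic.g_toRelative, if_neg hv, IDgrp.g_one Fv _ v hv]
    · by_cases hv : v ∈ D
      · rw [Ic.z_toRelative, if_pos hv, IDgrp.z_eq_zero_of_mem _ hv]
      · rw [Ic.z_toRelative, if_neg hv, Ilim.comp_toIc, Ilim.z_at_of_notMem φ hv])

lemma Ilim.continuous_toIc : Continuous (Ilim.toIc Fv) := by
  refine continuous_generateFrom_iff.2 ?_
  rintro _ ⟨S, W, hW, rfl⟩
  have hpre : Ilim.toIc Fv ⁻¹' {x : Ic Fv | (∀ v ∈ S, Ic.comp Fv x v ∈ W v) ∧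
      ∀ v ∉ S, (Valued.v ((Ic.comp Fv x v : Fv v)) : WithZero (Multiplicative ℤ)) = 1} =
      (fun φ => Ilim.at Fv φ S) ⁻¹'
        ({p | ∀ v ∈ S, IDgrp.g Fv p v ∈ W v} ∩ {p | ∀ v ∉ S, IDgrp.z Fv p v = 0}) := by
    ext φ
    refine and_congr (forall₂_congr fun v hv => ?_) (forall₂_congr fun v hv => ?_)
    · rw [Ilim.comp_toIc, Ilim.g_at_of_mem φ hv]
    · rw [Ilim.comp_toIc, Ilim.z_at_of_notMem φ hv, valUnit_eq_zero_iff]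
  have hunits : IsOpen {p : IDgrp Fv S | ∀ v ∈ S, IDgrp.g Fv p v ∈ W v} := by
    simp only [Set.ofPred_forall]
    exact isOpen_biInter_finset fun v _ => (hW v).preimage (IDgrp.continuous_g v)
  rw [hpre]
  exact (hunits.inter (IDgrp.isOpen_setOf_z fun z => ∀ v ∉ S, z v = 0)).preimage
    (Ilim.continuous_eval S)

lemma Ic.continuous_toIlim : Continuous (Ic.toIlim Fv) :=
  (continuous_pi fun D => Ic.continuous_toRelative Fv D).subtype_mk _

def icHomeomorphIlim : Ic Fv ≃ₜ Ilim Fv where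
  toEquiv := icEquivIlim Fv
  continuous_toFun := Ic.continuous_toIlim Fv
  continuous_invFun := Ilim.continuous_toIc Fv

theorem classical_ideles_iso_limit_ideles :
    ∃ e : Ic Fv → Ilim Fv,
      Function.Bijective e ∧ Continuous e ∧ IsOpenMap e ∧
      (∀ x y : Ic Fv, ∀ D, Ilim.at Fv (e (x * y)) D = Ilim.at Fv (e x) D + Ilim.at Fv (e y) D) ∧
      (∀ (x : Ic Fv) (D : Finset (HeightOneSpectrum A)),
        (∀ v, IDgrp.g Fv (Ilim.at Fv (e x) D) v = if v ∈ D then Ic.comp Fv x v else 1) ∧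
        (∀ v, IDgrp.z Fv (Ilim.at Fv (e x) D) v =
          if v ∈ D then 0 else valUnit Fv v (Ic.comp Fv x v))) :=
  ⟨icHomeomorphIlim Fv, (icHomeomorphIlim Fv).bijective, (icHomeomorphIlim Fv).continuous,
    (icHomeomorphIlim Fv).isOpenMap, Ic.toRelative_mul Fv,
    fun x D => ⟨Ic.g_toRelative Fv x D, Ic.z_toRelative Fv x D⟩⟩

end
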